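/- Fix γ > −1 and n ≥ 0. With G_{n,k}^γ(z) := (1/2π)∫₀^{2π} e^{i(n−2k)θ} L_n^γ((i/2)(z̄e^{iθ} − ze^{−iθ})) dθ, one has for all z ∈ 𝔻 and θ ∈ ℝ the Fourier expansion L_n^γ((i/2)(z̄e^{iθ} − ze^{−iθ})) = Σ_{k=0}^{n} e^{−i(n−2k)θ} G_{n,k}^γ(z); moreover, for 0 ≤ k ≤ n, G_{n,k}^γ is a polynomial in (z, z̄) of total degree n whose degree-n part is g_{n,k}^γ · z^{n−k} z̄^k with g_{n,k}^γ = (−1)^k binom(n,k)/(2i)^n; in particular G_{n,k}^γ is not identically zero. -/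

import Mathlib

open MeasureTheory Complex Metric Real Set

noncomputable section

/-! ## Geometry of the Euclidean disk and its space of lines (fan-beam coordinates) -/

/-- The chord of the closed unit disk through the boundary point `exp (I β)` with incoming
direction `exp (I (β + π + α))`, parametrized by arclength `t ∈ [0, 2 cos α]`. -/
def chord (β α t : ℝ) : ℂ :=
  Complex.exp ((β : ℂ) * Complex.I) +
    (t : ℂ) * Complex.exp (((β + π + α : ℝ) : ℂ) * Complex.I)

/-- The X-ray transform `I₀` in fan-beam coordinates. -/
def XRT (f : ℂ → ℂ) (β α : ℝ) : ℂ :=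
  ∫ t in (0:ℝ)..(2 * Real.cos α), f (chord β α t)

/-- The fan-beam coordinate `α₋(z, θ)` of the unique chord through `z` with direction `exp (I θ)`,
determined by `sin α₋ = Im (z * exp (-I θ))`. -/
def alpham (z : ℂ) (θ : ℝ) : ℝ :=
  Real.arcsin ((z * Complex.exp (-(θ : ℂ) * Complex.I)).im)

/-- The fan-beam coordinate `β₋(z, θ)`, determined by `β₋ + α₋ + π = θ`. -/
def betam (z : ℂ) (θ : ℝ) : ℝ := θ - π - alpham z θ

/-- Reduction modulo `2π` to the fundamental interval `(0, 2π]`. -/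
def wrap (x : ℝ) : ℝ := toIocMod Real.two_pi_pos 0 x

/-- The backprojection operator `I₀^♯`. -/
def BP (g : ℝ × ℝ → ℂ) (z : ℂ) : ℂ :=
  ∫ θ in (0:ℝ)..(2 * π), g (wrap (betam z θ), alpham z θ)

/-- The weighted backprojection operator `I₀^♯ μ^{-2γ-1}`, where `μ(β, α) = cos α`. -/
def BPW (γ : ℝ) (g : ℝ × ℝ → ℂ) : ℂ → ℂ :=
  BP fun p => ((Real.cos p.2 ^ (-(2 * γ) - 1) : ℝ) : ℂ) * g p

/-- The rectangle `(0, 2π] × [-π/2, π/2]` modelling the space of lines `∂₊S𝔻`. -/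
def Rect : Set (ℝ × ℝ) := Set.Ioc (0:ℝ) (2 * π) ×ˢ Set.Icc (-(π / 2)) (π / 2)

/-- The measure `μ^{-2γ} dβ dα` on `∂₊S𝔻`, where `μ(β, α) = cos α`. -/
def bdryMeasure (γ : ℝ) : Measure (ℝ × ℝ) :=
  ((volume : Measure (ℝ × ℝ)).restrict Rect).withDensity
    fun p => ENNReal.ofReal (Real.cos p.2 ^ (-(2 * γ)))

/-- The measure `d^γ dz` on the closed unit disk, where `d(z) = 1 - |z|²`. -/
def diskMeasure (γ : ℝ) : Measure ℂ :=
  ((volume : Measure ℂ).restrict (Metric.closedBall 0 1)).withDensity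
    fun z => ENNReal.ofReal ((1 - ‖z‖ ^ 2) ^ γ)

/-- `L n` is the monic orthogonal polynomial of degree `n` on `[-1, 1]` for the weight
`(1 - x²)^(γ + 1/2)`. -/
def IsMonicOrtho (γ : ℝ) (L : ℕ → Polynomial ℝ) : Prop :=
  ∀ n, (L n).Monic ∧ (L n).natDegree = n ∧
    ∀ m, m < n →
      (∫ x in (-1:ℝ)..(1:ℝ), (L n).eval x * x ^ m * (1 - x ^ 2) ^ (γ + 1/2)) = 0

/-- The functions `ψ_{n,k}^γ = μ^{2γ+1} ((-1)^n / 2π) e^{i(n-2k)(β+α)} L_n^γ (sin α)`. -/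
def psiF (γ : ℝ) (L : ℕ → Polynomial ℝ) (n : ℕ) (k : ℤ) (p : ℝ × ℝ) : ℂ :=
  ((Real.cos p.2 ^ (2 * γ + 1) : ℝ) : ℂ) * (((-1 : ℝ) ^ n / (2 * π) : ℝ) : ℂ) *
    Complex.exp (Complex.I * ((n : ℂ) - 2 * (k : ℂ)) * ((p.1 + p.2 : ℝ) : ℂ)) *
    (((L n).eval (Real.sin p.2) : ℝ) : ℂ)

/-- The generalized Zernike polynomials
`G_{n,k}^γ (z) = (1/2π) ∫₀^{2π} e^{i(n-2k)θ} L_n^γ ((i/2)(z̄ e^{iθ} - z e^{-iθ})) dθ`. -/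
def GZ (γ : ℝ) (L : ℕ → Polynomial ℝ) (n : ℕ) (k : ℤ) (z : ℂ) : ℂ :=
  ((1 / (2 * π) : ℝ) : ℂ) * ∫ θ in (0:ℝ)..(2 * π),
    Complex.exp (Complex.I * ((n : ℂ) - 2 * (k : ℂ)) * (θ : ℂ)) *
      Polynomial.aeval
        ((Complex.I / 2) *
          ((starRingEnd ℂ) z * Complex.exp ((θ : ℂ) * Complex.I) -
            z * Complex.exp (-(θ : ℂ) * Complex.I))) (L n)

/-- `L²(𝔻, d^γ dz)`-norm. -/
def dNorm (γ : ℝ) (f : ℂ → ℂ) : ℝ := Real.sqrt (∫ z, ‖f z‖ ^ 2 ∂(diskMeasure γ))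

/-- `L²(∂₊S𝔻, μ^{-2γ} dβ dα)`-norm. -/
def bNorm (γ : ℝ) (g : ℝ × ℝ → ℂ) : ℝ := Real.sqrt (∫ p, ‖g p‖ ^ 2 ∂(bdryMeasure γ))

/-- `G_{n,k}^γ` normalized to unit norm in `L²(𝔻, d^γ dz)`. -/
def Ghat (γ : ℝ) (L : ℕ → Polynomial ℝ) (n : ℕ) (k : ℤ) (z : ℂ) : ℂ :=
  (((dNorm γ (GZ γ L n k))⁻¹ : ℝ) : ℂ) * GZ γ L n k z

/-- `ψ_{n,k}^γ` normalized to unit norm in `L²(∂₊S𝔻, μ^{-2γ} dβ dα)`. -/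
def psihat (γ : ℝ) (L : ℕ → Polynomial ℝ) (n : ℕ) (k : ℤ) (p : ℝ × ℝ) : ℂ :=
  (((bNorm γ (psiF γ L n k))⁻¹ : ℝ) : ℂ) * psiF γ L n k p

/-- The squared singular values `(σ_{n,k}^γ)²`. -/
def sigSq (γ : ℝ) (n k : ℕ) : ℝ :=
  2 ^ (2 * γ + 2) * π * (n.choose k) *
    Real.Gamma ((n : ℝ) - k + γ + 1) * Real.Gamma ((k : ℝ) + γ + 1) /
      Real.Gamma ((n : ℝ) + 2 * γ + 2)

/-- The singular values `σ_{n,k}^γ ≥ 0`. -/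
def sig (γ : ℝ) (n k : ℕ) : ℝ := Real.sqrt (sigSq γ n k)

/-- The Beta function `B(x,y) = Γ(x)Γ(y)/Γ(x+y)`. -/
def betaFn (x y : ℝ) : ℝ := Real.Gamma x * Real.Gamma y / Real.Gamma (x + y)

/-! ## Differential operators -/

/-- Radial derivative `∂_ρ` in polar coordinates `z = ρ e^{iω}`. -/
def dRho (f : ℂ → ℂ) (z : ℂ) : ℂ :=
  deriv (fun r : ℝ => f ((r : ℂ) * Complex.exp ((z.arg : ℂ) * Complex.I))) ‖z‖

/-- Angular derivative `∂_ω` in polar coordinates `z = ρ e^{iω}`. -/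
def dOmega (f : ℂ → ℂ) (z : ℂ) : ℂ :=
  deriv (fun w : ℝ => f ((‖z‖ : ℂ) * Complex.exp ((w : ℂ) * Complex.I))) z.arg

/-- The operator `𝓛_γ = -(1-ρ²)∂_ρ² - (ρ⁻¹ - (3+2γ)ρ)∂_ρ - ρ⁻²∂_ω² + (γ+1)²`. -/
def Lop (γ : ℝ) (f : ℂ → ℂ) (z : ℂ) : ℂ :=
  -(1 - (‖z‖ : ℂ) ^ 2) * dRho (dRho f) z -
    ((‖z‖ : ℂ)⁻¹ - (3 + 2 * (γ : ℂ)) * (‖z‖ : ℂ)) * dRho f z -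
    ((‖z‖ : ℂ) ^ 2)⁻¹ * dOmega (dOmega f) z + ((γ : ℂ) + 1) ^ 2 * f z

/-- `∂_β` on `∂₊S𝔻`. -/
def dBeta (g : ℝ × ℝ → ℂ) (p : ℝ × ℝ) : ℂ := deriv (fun b : ℝ => g (b, p.2)) p.1

/-- `∂_α` on `∂₊S𝔻`. -/
def dAlpha (g : ℝ × ℝ → ℂ) (p : ℝ × ℝ) : ℂ := deriv (fun a : ℝ => g (p.1, a)) p.2

/-- The operator `T = ∂_β - ∂_α`. -/
def Tline (g : ℝ × ℝ → ℂ) (p : ℝ × ℝ) : ℂ := dBeta g p - dAlpha g p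

/-- The power `μ^e = (cos α)^e` as a complex-valued function on `∂₊S𝔻`. -/
def muC (e : ℝ) (p : ℝ × ℝ) : ℂ := ((Real.cos p.2 ^ e : ℝ) : ℂ)

/-- The operator `𝓣_γ = -μ^{2γ} T μ^{-2γ} T + γ²`. -/
def Tgam (γ : ℝ) (g : ℝ × ℝ → ℂ) (p : ℝ × ℝ) : ℂ :=
  -muC (2 * γ) p * Tline (fun q => muC (-(2 * γ)) q * Tline g q) p + (γ : ℂ) ^ 2 * g p

/-! ## Scattering relations and the space `C^∞_{α,+,+}(∂₊S𝔻)` -/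

/-- The scattering relation `𝒮(β, α) = (β + π + 2α, π - α)`. -/
def Scat (p : ℝ × ℝ) : ℝ × ℝ := (p.1 + π + 2 * p.2, π - p.2)

/-- The antipodal scattering relation `𝒮_A(β, α) = (β + π + 2α, -α)`. -/
def ScatA (p : ℝ × ℝ) : ℝ × ℝ := (p.1 + π + 2 * p.2, -p.2)

/-- Membership in `C^∞_{α,+,+}(∂₊S𝔻)`: `f`, given on the strip `ℝ × [-π/2, π/2]` (2π-periodically
in β), has an even extension through the scattering relation which is smooth on all of `∂S𝔻`
(modelled as a doubly 2π-periodic smooth function on `ℝ²` invariant under `𝒮`), and `f` is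
invariant under the antipodal scattering relation. -/
def MemCapp (f : ℝ × ℝ → ℂ) : Prop :=
  ∃ F : ℝ × ℝ → ℂ, ContDiff ℝ (⊤ : ℕ∞) F ∧
    (∀ p : ℝ × ℝ, F (p.1 + 2 * π, p.2) = F p) ∧
    (∀ p : ℝ × ℝ, F (p.1, p.2 + 2 * π) = F p) ∧
    (∀ p : ℝ × ℝ, F (Scat p) = F p) ∧
    (∀ p : ℝ × ℝ, p.2 ∈ Set.Icc (-(π / 2)) (π / 2) → F (ScatA p) = F p) ∧
    (∀ p : ℝ × ℝ, p.2 ∈ Set.Icc (-(π / 2)) (π / 2) → f p = F p)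

/-- `C^∞(𝔻)`: smooth up to the boundary of the closed unit disk. -/
def CinfDisk (f : ℂ → ℂ) : Prop := ContDiffOn ℝ (⊤ : ℕ∞) f (Metric.closedBall 0 1)

end

/-! With `u = e^{iθ}`, the `j`-th power of `(i/2)(z̄ u - z u⁻¹)` is a combination of the monomials
`z^a z̄^b u^{b-a}` with `a + b = j`, so averaging against `u^{n-2k}` keeps exactly those with
`a + 2k = n + b`: this exhibits `G_{n,k}` as a polynomial in `(z, z̄)` of degree at most `n`, whose
degree-`n` part comes from the leading coefficient `1` of `L_n` alone. Since the weight is even,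
`L_n(x) - (-1)^n L_n(-x)` has degree `< n` and is orthogonal to all lower powers, hence vanishes; so
only the parities `a + b ≡ n (mod 2)` occur, i.e. the frequencies `b - a = -(n - 2k)` with
`0 ≤ k ≤ n`, which gives the Fourier expansion. Finally, on the real segment `[0, 1]` the
function `G_{n,k}` is a polynomial in `r` with nonzero `r^n`-coefficient, so it is not identically
zero. -/

noncomputable section

open Polynomial Finset.HasAntidiagonal

lemma intervalIntegrable_one_sub_sq_rpow {e : ℝ} (he : -1 < e) :
    IntervalIntegrable (fun x : ℝ => (1 - x ^ 2) ^ e) volume (-1) 1 := by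
  have h_one_sub : IntervalIntegrable (fun x : ℝ => (1 - x) ^ e) volume 0 1 := by
    simpa using
      ((intervalIntegral.intervalIntegrable_rpow' he (a := 0) (b := 1)).comp_sub_left 1).symm
  have h_one_add : ContinuousOn (fun x : ℝ => (1 + x) ^ e) (uIcc 0 1) :=
    ContinuousOn.rpow_const (by fun_prop) fun x hx => Or.inl (by
      rw [uIcc_of_le zero_le_one] at hx; linarith [hx.1])
  have h_right : IntervalIntegrable (fun x : ℝ => (1 - x ^ 2) ^ e) volume 0 1 := by
    refine (h_one_sub.mul_continuousOn h_one_add).congr fun x hx => ?_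
    rw [uIoc_of_le zero_le_one] at hx
    rw [← Real.mul_rpow (by linarith [hx.2]) (by linarith [hx.1])]
    ring_nf
  have h_left : IntervalIntegrable (fun x : ℝ => (1 - x ^ 2) ^ e) volume (-1) 0 := by
    simpa using ((IntervalIntegrable.iff_comp_neg (by simp)).mp h_right).symm
  exact h_left.trans h_right

lemma Polynomial.coeff_comp_neg_X {R : Type*} [CommRing R] (p : R[X]) (j : ℕ) :
    (p.comp (-X)).coeff j = (-1) ^ j * p.coeff j := by
  rw [← neg_one_mul (X : R[X]), ← C_1, ← C_neg, comp_C_mul_X_coeff, mul_comm]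

lemma integral_eval_mul_self_mul_rpow_pos {e : ℝ} (he : -1 < e) {D : ℝ[X]} (hD : D ≠ 0) :
    0 < ∫ x in (-1 : ℝ)..1, D.eval x * D.eval x * (1 - x ^ 2) ^ e := by
  set f : ℝ → ℝ := fun x => D.eval x * D.eval x * (1 - x ^ 2) ^ e
  have hf_int : IntervalIntegrable f volume (-1) 1 :=
    (intervalIntegrable_one_sub_sq_rpow he).continuousOn_mul (by fun_prop)
  have hf_nonneg : 0 ≤ᵐ[volume.restrict (uIoc (-1 : ℝ) 1)] f := by
    filter_upwards [ae_restrict_mem measurableSet_uIoc] with x hx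
    rw [uIoc_of_le (by norm_num)] at hx
    have : 0 ≤ 1 - x ^ 2 := by nlinarith [hx.1, hx.2]
    exact mul_nonneg (mul_self_nonneg _) (Real.rpow_nonneg this e)
  have hroots : {x : ℝ | D.IsRoot x}.Finite :=
    Set.not_infinite.mp fun h => hD (D.eq_zero_of_infinite_isRoot h)
  have hsupport : Ioo (-1 : ℝ) 1 \ {x | D.IsRoot x} ⊆ Function.support f ∩ Ioc (-1) 1 := by
    rintro x ⟨hx, hDx⟩
    refine ⟨?_, Ioo_subset_Ioc_self hx⟩
    have : 0 < 1 - x ^ 2 := by nlinarith [hx.1, hx.2]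
    exact (mul_pos (mul_self_pos.mpr hDx) (Real.rpow_pos_of_pos this e)).ne'
  rw [intervalIntegral.integral_pos_iff_support_of_nonneg_ae' hf_nonneg hf_int]
  refine ⟨by norm_num, lt_of_lt_of_le ?_ (measure_mono hsupport)⟩
  rw [measure_sdiff_null (hroots.measure_zero volume), Real.volume_Ioo]
  norm_num

lemma Polynomial.eq_zero_of_forall_integral_mul_pow_rpow_eq_zero {e : ℝ} (he : -1 < e)
    {D : ℝ[X]} {n : ℕ} (hdeg : D.degree < n)
    (horth : ∀ m < n, ∫ x in (-1 : ℝ)..1, D.eval x * x ^ m * (1 - x ^ 2) ^ e = 0) : D = 0 := by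
  by_contra hD
  rw [← natDegree_lt_iff_degree_lt hD] at hdeg
  have hself : ∫ x in (-1 : ℝ)..1, D.eval x * D.eval x * (1 - x ^ 2) ^ e = 0 := by
    have hexpand : ∀ x : ℝ, D.eval x * D.eval x * (1 - x ^ 2) ^ e
        = ∑ m ∈ Finset.range n, D.coeff m * (D.eval x * x ^ m * (1 - x ^ 2) ^ e) := by
      intro x
      nth_rewrite 2 [eval_eq_sum_range' hdeg]
      rw [Finset.mul_sum, Finset.sum_mul]
      exact Finset.sum_congr rfl fun m _ => by ring
    simp_rw [hexpand]
    rw [intervalIntegral.integral_finsetSum fun m _ =>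
      ((intervalIntegrable_one_sub_sq_rpow he).continuousOn_mul (by fun_prop)).const_mul _]
    refine Finset.sum_eq_zero fun m hm => ?_
    rw [intervalIntegral.integral_const_mul, horth m (Finset.mem_range.mp hm), mul_zero]
  exact (integral_eval_mul_self_mul_rpow_pos he hD).ne' hself

lemma integral_eval_neg_mul_pow_mul_rpow (p : ℝ[X]) (m : ℕ) (e : ℝ) :
    ∫ x in (-1 : ℝ)..1, p.eval (-x) * x ^ m * (1 - x ^ 2) ^ e
      = (-1) ^ m * ∫ x in (-1 : ℝ)..1, p.eval x * x ^ m * (1 - x ^ 2) ^ e := by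
  calc _ = ∫ x in (-1 : ℝ)..1, (-1) ^ m * (p.eval (-x) * (-x) ^ m * (1 - (-x) ^ 2) ^ e) := by
        congr 1 with x
        have hsign : (-1 : ℝ) ^ m * (-x) ^ m = x ^ m := by rw [← mul_pow]; simp
        rw [neg_sq]
        linear_combination -(p.eval (-x) * (1 - x ^ 2) ^ e) * hsign
    _ = _ := by
        rw [intervalIntegral.integral_const_mul,
          intervalIntegral.integral_comp_neg fun x => p.eval x * x ^ m * (1 - x ^ 2) ^ e, neg_neg]

lemma IsMonicOrtho.coeff_eq_zero_of_odd {γ : ℝ} (hγ : -1 < γ) {L : ℕ → ℝ[X]}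
    (hL : IsMonicOrtho γ L) {n j : ℕ} (hj : Odd (n + j)) : (L n).coeff j = 0 := by
  obtain ⟨-, hdeg, horth⟩ := hL n
  have he : -1 < γ + 1 / 2 := by linarith
  set D : ℝ[X] := L n - C ((-1) ^ n) * (L n).comp (-X)
  have hDcoeff : ∀ i, D.coeff i = (1 - (-1) ^ (n + i)) * (L n).coeff i := fun i => by
    simp only [D, coeff_sub, coeff_C_mul, coeff_comp_neg_X, pow_add]
    ring
  have hDdeg : D.degree < n := (degree_lt_iff_coeff_zero _ _).mpr fun i hi => by
    rcases hi.eq_or_lt with rfl | hi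
    · rw [hDcoeff, (Even.add_self _).neg_one_pow, sub_self, zero_mul]
    · rw [hDcoeff, coeff_eq_zero_of_natDegree_lt (hdeg.trans_lt hi), mul_zero]
  have hD : D = 0 := by
    refine eq_zero_of_forall_integral_mul_pow_rpow_eq_zero he hDdeg fun m hm => ?_
    have hsplit : ∀ x : ℝ, D.eval x * x ^ m * (1 - x ^ 2) ^ (γ + 1 / 2)
        = (L n).eval x * x ^ m * (1 - x ^ 2) ^ (γ + 1 / 2)
          - (-1) ^ n * ((L n).eval (-x) * x ^ m * (1 - x ^ 2) ^ (γ + 1 / 2)) := fun x => by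
      simp only [D, eval_sub, eval_mul, eval_C, eval_comp, eval_neg, eval_X]
      ring
    simp_rw [hsplit]
    rw [intervalIntegral.integral_sub, intervalIntegral.integral_const_mul,
      integral_eval_neg_mul_pow_mul_rpow, horth m hm]
    · ring
    · exact (intervalIntegrable_one_sub_sq_rpow he).continuousOn_mul (by fun_prop)
    · exact ((intervalIntegrable_one_sub_sq_rpow he).continuousOn_mul (by fun_prop)).const_mul _
  have := hDcoeff j
  rw [hD, coeff_zero, hj.neg_one_pow] at this
  linarith

def zernikeArg (z : ℂ) (θ : ℝ) : ℂ :=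
  (Complex.I / 2) *
    ((starRingEnd ℂ) z * Complex.exp ((θ : ℂ) * Complex.I) - z * Complex.exp (-(θ : ℂ) * Complex.I))

def diskExponents (n : ℕ) : Finset (ℕ × ℕ) :=
  (Finset.range (n + 1) ×ˢ Finset.range (n + 1)).filter fun ab => ab.1 + ab.2 ≤ n

lemma sum_range_sum_antidiagonal_eq_sum_diskExponents {M : Type*} [AddCommMonoid M]
    (n : ℕ) (f : ℕ × ℕ → M) :
    ∑ j ∈ Finset.range (n + 1), ∑ ab ∈ antidiagonal j, f ab
      = ∑ ab ∈ diskExponents n, f ab := by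
  rw [← Finset.sum_fiberwise_of_maps_to (g := fun ab : ℕ × ℕ => ab.1 + ab.2)
    (t := Finset.range (n + 1)) fun ab hab => by
      simp only [diskExponents, Finset.mem_filter] at hab; simp only [Finset.mem_range]; omega]
  refine Finset.sum_congr rfl fun j hj => Finset.sum_congr ?_ fun _ _ => rfl
  ext ⟨a, b⟩
  simp only [Finset.mem_range] at hj
  simp only [diskExponents, Finset.HasAntidiagonal.mem_antidiagonal, Finset.mem_filter,
    Finset.mem_product, Finset.mem_range]
  omega

def zernikeMonomialCoeff (p : ℝ[X]) (ab : ℕ × ℕ) : ℂ :=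
  p.coeff (ab.1 + ab.2) * (Complex.I / 2) ^ (ab.1 + ab.2) * (ab.1 + ab.2).choose ab.1 * (-1) ^ ab.1

lemma aeval_zernikeArg {p : ℝ[X]} {n : ℕ} (hp : p.natDegree ≤ n) (z : ℂ) (θ : ℝ) :
    aeval (zernikeArg z θ) p
      = ∑ ab ∈ diskExponents n, zernikeMonomialCoeff p ab * z ^ ab.1 * (starRingEnd ℂ) z ^ ab.2
          * Complex.exp (Complex.I * ((ab.2 : ℂ) - ab.1) * θ) := by
  rw [aeval_eq_sum_range' (Nat.lt_succ_of_le hp),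
    ← sum_range_sum_antidiagonal_eq_sum_diskExponents]
  refine Finset.sum_congr rfl fun j _ => ?_
  have harg : zernikeArg z θ = Complex.I / 2 * (-z * Complex.exp (-(θ : ℂ) * Complex.I)
      + (starRingEnd ℂ) z * Complex.exp ((θ : ℂ) * Complex.I)) := by
    rw [zernikeArg]; ring
  rw [harg, mul_pow, (Commute.all _ _).add_pow', Finset.mul_sum, Finset.smul_sum]
  refine Finset.sum_congr rfl fun ⟨a, b⟩ hab => ?_
  rw [Finset.HasAntidiagonal.mem_antidiagonal] at hab
  subst hab
  have hexp : Complex.exp (-(θ : ℂ) * Complex.I) ^ a * Complex.exp ((θ : ℂ) * Complex.I) ^ b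
      = Complex.exp (Complex.I * ((b : ℂ) - a) * θ) := by
    rw [← Complex.exp_nat_mul, ← Complex.exp_nat_mul, ← Complex.exp_add]
    ring_nf
  rw [zernikeMonomialCoeff, ← hexp, Complex.real_smul, nsmul_eq_mul]
  ring

lemma integral_exp_I_mul_intCast_mul (d : ℤ) :
    ∫ θ in (0 : ℝ)..(2 * π), Complex.exp (Complex.I * d * θ) = if d = 0 then 2 * π else 0 := by
  split_ifs with hd
  · simp [hd]
  have hc : Complex.I * d ≠ 0 := by simp [Complex.I_ne_zero, hd]
  have hperiod : Complex.exp (Complex.I * d * (2 * π : ℝ)) = 1 := by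
    rw [← Complex.exp_int_mul_two_pi_mul_I d]; push_cast; ring_nf
  simp only [integral_exp_mul_complex hc, hperiod, Complex.ofReal_zero, mul_zero, Complex.exp_zero,
    sub_self, zero_div]

def zernikeCoeff (p : ℝ[X]) (n : ℕ) (k : ℤ) (ab : ℕ × ℕ) : ℂ :=
  if (ab.1 : ℤ) + 2 * k = n + ab.2 then zernikeMonomialCoeff p ab else 0

lemma GZ_eq_sum_zernikeCoeff (γ : ℝ) {L : ℕ → ℝ[X]} {n : ℕ} (hdeg : (L n).natDegree ≤ n)
    (k : ℤ) (z : ℂ) :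
    GZ γ L n k z = ∑ ab ∈ diskExponents n,
      zernikeCoeff (L n) n k ab * z ^ ab.1 * (starRingEnd ℂ) z ^ ab.2 := by
  have hintegrand : ∀ θ : ℝ,
      Complex.exp (Complex.I * ((n : ℂ) - 2 * (k : ℂ)) * θ) * aeval (zernikeArg z θ) (L n)
        = ∑ ab ∈ diskExponents n,
            zernikeMonomialCoeff (L n) ab * z ^ ab.1 * (starRingEnd ℂ) z ^ ab.2
              * Complex.exp (Complex.I * ((n - 2 * k + ab.2 - ab.1 : ℤ) : ℂ) * θ) := fun θ => by
    rw [aeval_zernikeArg hdeg, Finset.mul_sum]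
    refine Finset.sum_congr rfl fun ab _ => ?_
    rw [mul_comm, mul_assoc, ← Complex.exp_add]
    push_cast
    ring_nf
  unfold zernikeArg at hintegrand
  simp only [GZ, hintegrand]
  rw [intervalIntegral.integral_finsetSum fun _ _ =>
    (by fun_prop : Continuous _).intervalIntegrable _ _, Finset.mul_sum]
  refine Finset.sum_congr rfl fun ab _ => ?_
  rw [intervalIntegral.integral_const_mul, integral_exp_I_mul_intCast_mul, zernikeCoeff]
  have hπ : (π : ℂ) ≠ 0 := Complex.ofReal_ne_zero.mpr Real.pi_ne_zero
  split_ifs with h₁ h₂ h₂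
  · push_cast; field_simp
  · omega
  · omega
  · simp

lemma aeval_zernikeArg_eq_sum_GZ (γ : ℝ) {L : ℕ → ℝ[X]} {n : ℕ} (hdeg : (L n).natDegree ≤ n)
    (hpar : ∀ j, Odd (n + j) → (L n).coeff j = 0) (z : ℂ) (θ : ℝ) :
    aeval (zernikeArg z θ) (L n) = ∑ k ∈ Finset.range (n + 1),
      Complex.exp (-Complex.I * ((n : ℂ) - 2 * (k : ℂ)) * θ) * GZ γ L n k z := by
  simp_rw [GZ_eq_sum_zernikeCoeff γ hdeg, Finset.mul_sum]
  rw [Finset.sum_comm, aeval_zernikeArg hdeg]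
  refine Finset.sum_congr rfl fun ⟨a, b⟩ hab => ?_
  simp only [diskExponents, Finset.mem_filter, Finset.mem_product, Finset.mem_range] at hab
  by_cases hcoeff : (L n).coeff (a + b) = 0
  · simp [zernikeCoeff, zernikeMonomialCoeff, hcoeff]
  have heven : Even (n + (a + b)) := Nat.not_odd_iff_even.mp fun h => hcoeff (hpar _ h)
  obtain ⟨r, hr⟩ := heven
  rw [Finset.sum_eq_single_of_mem (r - a) (Finset.mem_range.mpr (by omega))]
  · rw [zernikeCoeff, if_pos (by push_cast; omega)]
    have hr' : (n : ℂ) + (a + b) = r + r := by exact_mod_cast hr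
    rw [mul_comm (Complex.exp _), Nat.cast_sub (by omega)]
    congr 2
    linear_combination (Complex.I * θ) * hr'
  · intro k _ hk
    rw [zernikeCoeff, if_neg (by omega), zero_mul, zero_mul, mul_zero]

lemma zernikeCoeff_leading {p : ℝ[X]} {n k : ℕ} (hmon : p.Monic) (hdeg : p.natDegree = n)
    (hk : k ≤ n) :
    zernikeCoeff p n k (n - k, k) = (-1) ^ k * (n.choose k : ℂ) / (2 * Complex.I) ^ n := by
  have hlead : p.coeff n = 1 := hdeg ▸ hmon.coeff_natDegree
  rw [zernikeCoeff, if_pos (by push_cast [Nat.cast_sub hk]; ring), zernikeMonomialCoeff,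
    Nat.sub_add_cancel hk, hlead, Nat.choose_symm hk, eq_div_iff (by simp)]
  have hI : (Complex.I / 2) ^ n * (2 * Complex.I) ^ n = (-1) ^ n := by
    rw [← mul_pow]; congr 1; linear_combination Complex.I_mul_I
  have hsign : (-1 : ℂ) ^ (n - k) * (-1) ^ n = (-1) ^ k := by
    rw [← pow_add, show n - k + n = k + 2 * (n - k) by omega, pow_add, pow_mul]; simp
  push_cast
  linear_combination (n.choose k : ℂ) * (-1) ^ (n - k) * hI + (n.choose k : ℂ) * hsign

lemma zernikeCoeff_eq_zero_of_add_eq {p : ℝ[X]} {n k a b : ℕ} (hab : a + b = n)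
    (hne : (a, b) ≠ (n - k, k)) : zernikeCoeff p n k (a, b) = 0 :=
  if_neg fun h => hne (Prod.ext (by simp only; omega) (by simp only; omega))

lemma exists_mem_closedBall_sum_mul_pow_conj_ne_zero (s : Finset (ℕ × ℕ)) (c : ℕ × ℕ → ℂ) (n : ℕ)
    (htop : ∑ ab ∈ s with ab.1 + ab.2 = n, c ab ≠ 0) :
    ∃ z ∈ closedBall (0 : ℂ) 1, ∑ ab ∈ s, c ab * z ^ ab.1 * (starRingEnd ℂ) z ^ ab.2 ≠ 0 := by
  set q : ℂ[X] := ∑ ab ∈ s, C (c ab) * X ^ (ab.1 + ab.2)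
  have hq : q ≠ 0 := fun h => htop <| by
    rw [← coeff_zero (R := ℂ) n, ← h]
    simp [q, finsetSum_coeff, coeff_X_pow, Finset.sum_filter, eq_comm]
  by_contra! hzero
  refine hq (eq_zero_of_infinite_isRoot q ?_)
  refine ((Set.Icc_infinite zero_lt_one).image Complex.ofReal_injective.injOn).mono ?_
  rintro _ ⟨r, hr, rfl⟩
  have hr' : (r : ℂ) ∈ closedBall (0 : ℂ) 1 := by
    simpa [abs_of_nonneg hr.1] using hr.2
  simpa [q, eval_finsetSum, pow_add, mul_assoc] using hzero r hr'

/-- Fourier expansion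
`L_n^γ((i/2)(z̄ e^{iθ} - z e^{-iθ})) = Σ_{k=0}^n e^{-i(n-2k)θ} G_{n,k}^γ(z)`; moreover for
`0 ≤ k ≤ n`, `G_{n,k}^γ` is a polynomial in `(z, z̄)` of total degree `n` whose degree-`n` part is
`g_{n,k}^γ z^{n-k} z̄^k` with `g_{n,k}^γ = (-1)^k binom(n,k) / (2i)^n`; in particular `G_{n,k}^γ`
is not identically zero on `𝔻`. -/
theorem Gnk_fourier_and_leading_term (γ : ℝ) (hγ : -1 < γ)
    (L : ℕ → Polynomial ℝ) (hL : IsMonicOrtho γ L) (n : ℕ) :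
    (∀ z ∈ Metric.closedBall (0 : ℂ) 1, ∀ θ : ℝ,
      Polynomial.aeval
          ((Complex.I / 2) *
            ((starRingEnd ℂ) z * Complex.exp ((θ : ℂ) * Complex.I) -
              z * Complex.exp (-(θ : ℂ) * Complex.I))) (L n)
        = ∑ k ∈ Finset.range (n + 1),
            Complex.exp (-Complex.I * ((n : ℂ) - 2 * (k : ℂ)) * (θ : ℂ)) *
              GZ γ L n (k : ℤ) z) ∧
    (∀ k : ℕ, k ≤ n →
      (∃ c : ℕ × ℕ → ℂ,
        (∀ z : ℂ, GZ γ L n (k : ℤ) z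
            = ∑ ab ∈ (Finset.range (n + 1) ×ˢ Finset.range (n + 1)).filter
                (fun ab => ab.1 + ab.2 ≤ n),
                c ab * z ^ ab.1 * ((starRingEnd ℂ) z) ^ ab.2) ∧
        c (n - k, k) = (-1) ^ k * (n.choose k : ℂ) / (2 * Complex.I) ^ n ∧
        (∀ a b : ℕ, a + b = n → (a, b) ≠ (n - k, k) → c (a, b) = 0)) ∧
      ∃ z ∈ Metric.closedBall (0 : ℂ) 1, GZ γ L n (k : ℤ) z ≠ 0) := by
  obtain ⟨hmon, hdeg, -⟩ := hL n
  refine ⟨fun z _ θ => aeval_zernikeArg_eq_sum_GZ γ hdeg.le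
    (fun j hj => hL.coeff_eq_zero_of_odd hγ hj) z θ, fun k hk => ?_⟩
  have hrep := GZ_eq_sum_zernikeCoeff γ hdeg.le k
  have hlead := zernikeCoeff_leading hmon hdeg hk
  have htop : ∑ ab ∈ diskExponents n with ab.1 + ab.2 = n, zernikeCoeff (L n) n k ab ≠ 0 := by
    have hmem : (n - k, k) ∈ {ab ∈ diskExponents n | ab.1 + ab.2 = n} := by
      simp only [diskExponents, Finset.mem_filter, Finset.mem_product, Finset.mem_range]; omega
    rw [Finset.sum_eq_single_of_mem (n - k, k) hmem
      fun ⟨a, b⟩ hab hne => zernikeCoeff_eq_zero_of_add_eq (Finset.mem_filter.mp hab).2 hne, hlead]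
    simp [Nat.choose_ne_zero hk]
  obtain ⟨z, hz, hne⟩ := exists_mem_closedBall_sum_mul_pow_conj_ne_zero _ _ n htop
  exact ⟨⟨zernikeCoeff (L n) n k, hrep, hlead, fun a b => zernikeCoeff_eq_zero_of_add_eq⟩,
    z, hz, hrep z ▸ hne⟩

end
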